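/- For all natural numbers m, n ≥ 1, the second inverse Nirmala entropy of the terpyridine complex nanosheet TCN_{n,m}, defined as ENT_{IN2}(n,m) = −Σ (w/W)·log(w/W) where the sum runs over the edges with weights w = 1 on each of the 96mn+16n+80m edges of class E1, w = √6/√5 on each of the 168mn+12n+108m edges of class E2, w = 3/√6 on each of the 96mn+12n+72m edges of class E3, w = √2 on each of the 36mn+6n+30m edges of class E4, and W = IN2(n,m) is the total weight, equals log(IN2(n,m)) − (1/IN2(n,m))·[(168mn+12n+108m)·(√6/√5)·log(√6/√5) + (96mn+12n+72m)·(3/√6)·log(3/√6) + (36mn+6n+30m)·√2·log(√2)], where IN2(n,m) = 96mn + 16n + 80m + (√6/√5)·(168mn+12n+108m) + 48√6·mn + 6√6·n + 36√6·m + 36√2·mn + 6√2·n + 30√2·m. -/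
import Mathlib


/-- The second inverse Nirmala entropy of the terpyridine complex nanosheet `TCN_{n,m}`. -/
theorem second_inverse_nirmala_entropy_TCN (m n : ℕ) (hm : 1 ≤ m) (hn : 1 ≤ n) :
    (let IN2 : ℝ := 96 * m * n + 16 * n + 80 * m
      + (Real.sqrt 6 / Real.sqrt 5) * (168 * m * n + 12 * n + 108 * m)
      + 48 * Real.sqrt 6 * (m * n) + 6 * Real.sqrt 6 * n + 36 * Real.sqrt 6 * m
      + 36 * Real.sqrt 2 * (m * n) + 6 * Real.sqrt 2 * n + 30 * Real.sqrt 2 * m;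
    -((96 * m * n + 16 * n + 80 * m : ℝ) * ((1 / IN2) * Real.log (1 / IN2))
      + (168 * m * n + 12 * n + 108 * m : ℝ)
          * ((Real.sqrt 6 / Real.sqrt 5 / IN2) * Real.log (Real.sqrt 6 / Real.sqrt 5 / IN2))
      + (96 * m * n + 12 * n + 72 * m : ℝ)
          * ((3 / Real.sqrt 6 / IN2) * Real.log (3 / Real.sqrt 6 / IN2))
      + (36 * m * n + 6 * n + 30 * m : ℝ)
          * ((Real.sqrt 2 / IN2) * Real.log (Real.sqrt 2 / IN2)))
    = Real.log IN2 - (1 / IN2) *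
        ((168 * m * n + 12 * n + 108 * m : ℝ)
            * (Real.sqrt 6 / Real.sqrt 5) * Real.log (Real.sqrt 6 / Real.sqrt 5)
          + (96 * m * n + 12 * n + 72 * m : ℝ)
              * (3 / Real.sqrt 6) * Real.log (3 / Real.sqrt 6)
          + (36 * m * n + 6 * n + 30 * m : ℝ)
              * Real.sqrt 2 * Real.log (Real.sqrt 2))) := by
  have s2pos : (0:ℝ) < Real.sqrt 2 := Real.sqrt_pos.mpr (by norm_num)
  have s5pos : (0:ℝ) < Real.sqrt 5 := Real.sqrt_pos.mpr (by norm_num)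
  have s6pos : (0:ℝ) < Real.sqrt 6 := Real.sqrt_pos.mpr (by norm_num)
  have hs6 : Real.sqrt 6 * Real.sqrt 6 = 6 := Real.mul_self_sqrt (by norm_num)
  have hb : (3:ℝ) / Real.sqrt 6 = Real.sqrt 6 / 2 := by
    rw [div_eq_div_iff s6pos.ne' (by norm_num)]
    linarith [hs6]
  have hm' : (1:ℝ) ≤ (m:ℝ) := by exact_mod_cast hm
  have hn' : (1:ℝ) ≤ (n:ℝ) := by exact_mod_cast hn
  have hIN2 : (0:ℝ) < 96 * m * n + 16 * n + 80 * m
      + (Real.sqrt 6 / Real.sqrt 5) * (168 * m * n + 12 * n + 108 * m)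
      + 48 * Real.sqrt 6 * (m * n) + 6 * Real.sqrt 6 * n + 36 * Real.sqrt 6 * m
      + 36 * Real.sqrt 2 * (m * n) + 6 * Real.sqrt 2 * n + 30 * Real.sqrt 2 * m := by
    have h1 : (0:ℝ) ≤ (Real.sqrt 6 / Real.sqrt 5) * (168 * m * n + 12 * n + 108 * m) := by
      positivity
    have h2 : (0:ℝ) ≤ 48 * Real.sqrt 6 * (m * n) + 6 * Real.sqrt 6 * n + 36 * Real.sqrt 6 * m := by
      positivity
    have h3 : (0:ℝ) ≤ 36 * Real.sqrt 2 * (m * n) + 6 * Real.sqrt 2 * n + 30 * Real.sqrt 2 * m := by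
      positivity
    nlinarith
  intro IN2
  have key : (96 * m * n + 16 * n + 80 * m : ℝ)
      + (168 * m * n + 12 * n + 108 * m : ℝ) * (Real.sqrt 6 / Real.sqrt 5)
      + (96 * m * n + 12 * n + 72 * m : ℝ) * (Real.sqrt 6 / 2)
      + (36 * m * n + 6 * n + 30 * m : ℝ) * Real.sqrt 2 = IN2 := by
    show _ = (_:ℝ)
    ring
  have hIN2' : (0:ℝ) < IN2 := hIN2
  clear_value IN2
  have hIN2ne : IN2 ≠ 0 := hIN2'.ne'
  rw [hb, one_div, Real.log_inv,
    Real.log_div (by positivity : Real.sqrt 6 / Real.sqrt 5 ≠ 0) hIN2ne,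
    Real.log_div (by positivity : Real.sqrt 6 / 2 ≠ 0) hIN2ne,
    Real.log_div s2pos.ne' hIN2ne]
  linear_combination (Real.log IN2 / IN2) * key + Real.log IN2 * mul_inv_cancel₀ hIN2ne
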